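/- arXiv:2109.02566 — 2 statements merged into one kernel-verified Lean document; each statement's English description precedes it below -/
import Mathlib

section
/- Edge-reinforced random walk is partially exchangeable: for any finite graph G with initial weights α > 0 and any two finite paths σ, σ' starting at 0 that traverse each (undirected) edge of G the same number of times and end at the same vertex, the probability that the first n steps of the ERRW follow σ equals the probability that they follow σ'. -/
/-- Number of times the path `σ` crosses the undirected edge `{i,j}` during its first
`n` steps (in either direction). -/
def crossCount {V : Type*} [DecidableEq V] (σ : ℕ → V) (n : ℕ) (i j : V) : ℕ :=
  ((Finset.range n).filter
    (fun m => (σ m = i ∧ σ (m + 1) = j) ∨ (σ m = j ∧ σ (m + 1) = i))).card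

/-- The probability that an edge-reinforced random walk on `G` with initial weights `α`
follows the path `σ` for its first `n` steps: the product of the ERRW transition
probabilities `(α + L_m^{σ_m σ_{m+1}}) / Σ_k (α + L_m^{σ_m k})`. -/
noncomputable def errwPathProb {V : Type*} [Fintype V] [DecidableEq V]
    (G : SimpleGraph V) [DecidableRel G.Adj] (α : ℝ) (σ : ℕ → V) (n : ℕ) : ℝ :=
  ∏ m ∈ Finset.range n,
    (if G.Adj (σ m) (σ (m + 1)) then α + crossCount σ m (σ m) (σ (m + 1)) else 0) /
      ∑ k ∈ Finset.univ.filter (fun k => G.Adj (σ m) k), (α + crossCount σ m (σ m) k)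
/-!
The ERRW probability of a path is a product of numerators over denominators, and both can be
regrouped. Grouping the numerators by edge gives `∏ₑ ∏_{k < Lₑ} (α + k)`, where `Lₑ` is the
crossing count of `e`. Grouping the denominators by vertex, the one at the `c`-th departure
from `v` is `deg v · α + 2c + 1 - [v = v₀]`: each earlier visit to `v` has crossed two edges
at `v`, except the start, which crossed only one. So the probability depends only on the
crossing counts, the start and the visit counts, and the handshake identity
`∑ₖ L_{vk} + [start = v] = 2 · #visits(v) + [end = v]` recovers the visit counts from the
crossing counts and the endpoints.
-/

open Finset

theorem prod_range_eq_prod_prod_range_count {β M : Type*} [Fintype β] [DecidableEq β]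
    [CommMonoid M] (key : ℕ → β) (f : β → ℕ → M) (n : ℕ) :
    ∏ m ∈ range n, f (key m) (Nat.count (key · = key m) m)
      = ∏ b, ∏ k ∈ range (Nat.count (key · = b) n), f b k := by
  induction n with
  | zero => simp
  | succ n ih =>
    have hstep : ∀ b, ∏ k ∈ range (Nat.count (key · = b) (n + 1)), f b k
        = (∏ k ∈ range (Nat.count (key · = b) n), f b k)
          * if key n = b then f b (Nat.count (key · = b) n) else 1 := by
      intro b
      rw [Nat.count_succ]
      split_ifs <;> simp [prod_range_succ]
    rw [prod_range_succ, ih, prod_congr rfl fun b _ => hstep b, prod_mul_distrib, prod_ite_eq,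
      if_pos (mem_univ _)]

section Walk

variable {V : Type*} [DecidableEq V]

theorem crossCount_eq_count (σ : ℕ → V) (n : ℕ) (i j : V) :
    crossCount σ n i j = Nat.count (fun m => s(σ m, σ (m + 1)) = s(i, j)) n := by
  simp only [crossCount, Nat.count_eq_card_filter_range, Sym2.eq_iff]

theorem crossCount_eq_zero_of_not_adj {G : SimpleGraph V} {σ : ℕ → V} {n : ℕ}
    (hσ : ∀ m < n, G.Adj (σ m) (σ (m + 1))) {i j : V} (hij : ¬ G.Adj i j) :
    crossCount σ n i j = 0 := by
  rw [crossCount, card_eq_zero, filter_eq_empty_iff]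
  rintro m hm (⟨rfl, rfl⟩ | ⟨rfl, rfl⟩)
  · exact hij (hσ m (mem_range.mp hm))
  · exact hij (hσ m (mem_range.mp hm)).symm

variable [Fintype V] (G : SimpleGraph V) [DecidableRel G.Adj]

theorem sum_ite_mk_eq_of_adj {a b : V} (h : G.Adj a b) (v : V) :
    ∑ k ∈ univ.filter (G.Adj v), (if s(a, b) = s(v, k) then 1 else 0 : ℕ)
      = (if a = v then 1 else 0) + (if b = v then 1 else 0) := by
  rcases eq_or_ne a v with rfl | ha
  · simp [h, h.ne.symm]
  · rcases eq_or_ne b v with rfl | hb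
    · simp [ha, h.symm, Sym2.eq_swap (a := a)]
    · simp [ha, hb]

theorem sum_crossCount_add_ite_start {σ : ℕ → V} {n : ℕ}
    (hσ : ∀ m < n, G.Adj (σ m) (σ (m + 1))) (v : V) :
    (∑ k ∈ univ.filter (G.Adj v), crossCount σ n v k) + (if σ 0 = v then 1 else 0)
      = 2 * Nat.count (σ · = v) n + (if σ n = v then 1 else 0) := by
  induction n with
  | zero => simp [crossCount]
  | succ n ih =>
    have hstep := sum_ite_mk_eq_of_adj G (hσ n n.lt_succ_self) v
    simp_rw [crossCount_eq_count _ (n + 1), Nat.count_succ, ← crossCount_eq_count,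
      sum_add_distrib, hstep]
    have := ih fun m hm => hσ m (hm.trans n.lt_succ_self)
    split_ifs at * <;> omega

theorem errwPathProb_eq {α : ℝ} {σ : ℕ → V} {n : ℕ}
    (hσ : ∀ m < n, G.Adj (σ m) (σ (m + 1))) :
    errwPathProb G α σ n
      = (∏ e : Sym2 V, ∏ k ∈ range (Nat.count (fun m => s(σ m, σ (m + 1)) = e) n), (α + k))
        / ∏ v, ∏ c ∈ range (Nat.count (σ · = v) n),
            ((univ.filter (G.Adj v)).card * α + 2 * c + 1 - if σ 0 = v then 1 else 0) := by
  have hden : ∀ m < n, ∑ k ∈ univ.filter (G.Adj (σ m)), (α + crossCount σ m (σ m) k)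
      = (univ.filter (G.Adj (σ m))).card * α + 2 * Nat.count (σ · = σ m) m + 1
          - if σ 0 = σ m then 1 else 0 := by
    intro m hm
    have := sum_crossCount_add_ite_start G (fun m' hm' => hσ m' (hm'.trans hm)) (σ m)
    rw [if_pos rfl] at this
    have hcast : (∑ k ∈ univ.filter (G.Adj (σ m)), (crossCount σ m (σ m) k : ℝ))
        + (if σ 0 = σ m then 1 else 0) = 2 * Nat.count (σ · = σ m) m + 1 := by
      exact_mod_cast this
    rw [sum_add_distrib, sum_const, nsmul_eq_mul]
    linarith
  rw [errwPathProb, prod_div_distrib]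
  congr 1
  · rw [prod_congr rfl fun m hm => by rw [if_pos (hσ m (mem_range.mp hm)), crossCount_eq_count]]
    exact prod_range_eq_prod_prod_range_count (fun m => s(σ m, σ (m + 1))) (fun _ k => α + k) n
  · rw [prod_congr rfl fun m hm => hden m (mem_range.mp hm)]
    exact prod_range_eq_prod_prod_range_count σ
      (fun v c => (univ.filter (G.Adj v)).card * α + 2 * c + 1 - if σ 0 = v then 1 else 0) n

end Walk

theorem errw_partially_exchangeable_general {V : Type*} [Fintype V] [DecidableEq V]
    (G : SimpleGraph V) [DecidableRel G.Adj] (α : ℝ)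
    (v₀ : V) (σ σ' : ℕ → V) (n : ℕ)
    (hσ : ∀ m < n, G.Adj (σ m) (σ (m + 1)))
    (hσ' : ∀ m < n, G.Adj (σ' m) (σ' (m + 1)))
    (h0 : σ 0 = v₀) (h0' : σ' 0 = v₀)
    (hend : σ n = σ' n)
    (hcross : ∀ i j : V, G.Adj i j → crossCount σ n i j = crossCount σ' n i j) :
    errwPathProb G α σ n = errwPathProb G α σ' n := by
  have hedges : ∀ e : Sym2 V, Nat.count (fun m => s(σ m, σ (m + 1)) = e) n
      = Nat.count (fun m => s(σ' m, σ' (m + 1)) = e) n := by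
    rintro ⟨i, j⟩
    simp_rw [← crossCount_eq_count]
    by_cases hij : G.Adj i j
    · exact hcross i j hij
    · rw [crossCount_eq_zero_of_not_adj hσ hij, crossCount_eq_zero_of_not_adj hσ' hij]
  have hvisits : ∀ v, Nat.count (σ · = v) n = Nat.count (σ' · = v) n := by
    intro v
    have h := sum_crossCount_add_ite_start G hσ v
    have h' := sum_crossCount_add_ite_start G hσ' v
    have hsum : ∑ k ∈ univ.filter (G.Adj v), crossCount σ n v k
        = ∑ k ∈ univ.filter (G.Adj v), crossCount σ' n v k :=
      sum_congr rfl fun k hk => hcross v k (mem_filter.mp hk).2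
    rw [h0, hend] at h
    rw [h0'] at h'
    omega
  rw [errwPathProb_eq G hσ, errwPathProb_eq G hσ', h0, h0']
  simp_rw [hedges, hvisits]

/-- Partial exchangeability of edge-reinforced random walk: two paths in `G` starting at
the same vertex `v₀`, ending at the same vertex, and crossing each undirected edge of `G`
the same number of times, have the same ERRW probability. -/
theorem errw_partially_exchangeable {V : Type*} [Fintype V] [DecidableEq V]
    (G : SimpleGraph V) [DecidableRel G.Adj] (α : ℝ) (hα : 0 < α)
    (v₀ : V) (σ σ' : ℕ → V) (n : ℕ)
    (hσ : ∀ m < n, G.Adj (σ m) (σ (m + 1)))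
    (hσ' : ∀ m < n, G.Adj (σ' m) (σ' (m + 1)))
    (h0 : σ 0 = v₀) (h0' : σ' 0 = v₀)
    (hend : σ n = σ' n)
    (hcross : ∀ i j : V, G.Adj i j → crossCount σ n i j = crossCount σ' n i j) :
    errwPathProb G α σ n = errwPathProb G α σ' n :=
  errw_partially_exchangeable_general G α v₀ σ σ' n hσ hσ' h0 h0' hend hcross
end

section
/- For edge-reinforced random walk with α = 2 on the path graph with three vertices a — 0 — b started at the middle vertex 0, for every n the vector of half-crossing-counts (L_{2n}^{0a}/2, L_{2n}^{0b}/2) has the same distribution as the ball counts added in a Pólya urn after n draws; consequently L_{2n}^{0a}/(2n) converges in distribution to the uniform distribution on [0,1]. -/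
open MeasureTheory Filter Topology ENNReal

/-- Number of crossings of the undirected edge `{i,j}` by the walk `X` up to time `n`. -/
def walkCross {Ω : Type*} (X : ℕ → Ω → Fin 3) (n : ℕ) (ω : Ω) (i j : Fin 3) : ℕ :=
  ((Finset.range n).filter
    (fun m => (X m ω = i ∧ X (m + 1) ω = j) ∨ (X m ω = j ∧ X (m + 1) ω = i))).card

/-- Adjacency in the path graph `a — 0 — b` on vertices `{0, 1, 2}` (middle vertex `1`):
two vertices are adjacent iff exactly one of them equals `1`. -/
def pathAdj (i j : Fin 3) : Prop := (i = 1 ∧ j ≠ 1) ∨ (j = 1 ∧ i ≠ 1)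

instance : DecidableRel pathAdj := fun i j => by unfold pathAdj; infer_instance

/-!
Almost surely the walk only moves along edges, so it is at the middle vertex at even times and
each pair of steps is an excursion to `a` or to `b` that crosses one edge twice. With `α = 2`, if
`k` of the first `n` excursions went to `a`, the next one goes to `a` with probability
`(2 + 2k) / (4 + 2n) = (k + 1) / (n + 2)`: this is the Pólya urn with one ball of each colour, and
the number of draws of the first colour after `n` draws is uniform on `{0, …, n}`. The
distribution functions of these uniform laws, rescaled by `n`, converge to that of the uniform
law on `[0, 1]`.
-/

/-- `q n k` is the probability that `k` of the first `n` draws of a Pólya urn started with one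
ball of each colour are of the first colour. -/
theorem polyaUrn_uniform {q : ℕ → ℕ → ℝ} (h0 : ∀ k, q 0 k = if k = 0 then 1 else 0)
    (hzero : ∀ n : ℕ, q (n + 1) 0 = (n + 1) / (n + 2) * q n 0)
    (hsucc : ∀ n k : ℕ,
      q (n + 1) (k + 1) = (n - k) / (n + 2) * q n (k + 1) + (k + 1) / (n + 2) * q n k)
    (n k : ℕ) : q n k = if k ≤ n then 1 / ((n : ℝ) + 1) else 0 := by
  induction n generalizing k with
  | zero => simp [h0]
  | succ n ih =>
    cases k with
    | zero =>
      rw [hzero, ih, if_pos n.zero_le, if_pos (n + 1).zero_le]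
      push_cast; field_simp; ring
    | succ k =>
      rw [hsucc, ih, ih]
      rcases lt_trichotomy k n with hk | rfl | hk
      · rw [if_pos (Nat.succ_le_of_lt hk), if_pos hk.le, if_pos (by omega)]
        push_cast; field_simp; ring
      · rw [sub_self, zero_div, zero_mul, zero_add, if_pos le_rfl, if_pos le_rfl]
        push_cast; field_simp; ring
      · rw [if_neg (by omega), if_neg (by omega), if_neg (by omega)]; simp

lemma tendsto_mul_add_div_add_one {x : ℝ} (c : ℝ) :
    Tendsto (fun n : ℕ => (n * x + c) / (n + 1)) atTop (𝓝 x) := by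
  have h := ((tendsto_natCast_div_add_atTop (1 : ℝ)).const_mul x).add
    (tendsto_one_div_add_atTop_nhds_zero_nat.const_mul c)
  rw [mul_one, mul_zero, add_zero] at h
  refine h.congr fun n => ?_
  field_simp

lemma tendsto_natFloor_mul_add_one_div {x : ℝ} (hx : 0 ≤ x) :
    Tendsto (fun n : ℕ => ((⌊n * x⌋₊ : ℝ) + 1) / (n + 1)) atTop (𝓝 x) := by
  refine tendsto_of_tendsto_of_tendsto_of_le_of_le (tendsto_mul_add_div_add_one 0)
    (tendsto_mul_add_div_add_one 1) (fun n => ?_) (fun n => ?_)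
  · have := Nat.lt_floor_add_one ((n : ℝ) * x)
    exact div_le_div_of_nonneg_right (by linarith) (by positivity)
  · have := Nat.floor_le (mul_nonneg n.cast_nonneg hx)
    dsimp only
    gcongr

section CondProb

variable {Ω : Type*} {m m₀ : MeasurableSpace Ω} {μ : Measure[m₀] Ω} [IsFiniteMeasure μ]
  {A B : Set Ω} {f : Ω → ℝ}

theorem measureReal_inter_eq_setIntegral (hm : m ≤ m₀) (hB : MeasurableSet[m₀] B)
    (hf : μ[B.indicator (fun _ => (1 : ℝ)) | m] =ᵐ[μ] f) (hA : MeasurableSet[m] A) :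
    μ.real (A ∩ B) = ∫ ω in A, f ω ∂μ := by
  rw [← integral_congr_ae (ae_restrict_of_ae hf),
    setIntegral_condExp hm ((integrable_const 1).indicator hB) hA, setIntegral_indicator hB,
    setIntegral_const, smul_eq_mul, mul_one]

theorem measureReal_inter_eq_mul (hm : m ≤ m₀) (hB : MeasurableSet[m₀] B)
    (hf : μ[B.indicator (fun _ => (1 : ℝ)) | m] =ᵐ[μ] f) (hA : MeasurableSet[m] A) {c : ℝ}
    (hc : ∀ᵐ ω ∂μ, ω ∈ A → f ω = c) :
    μ.real (A ∩ B) = c * μ.real A := by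
  rw [measureReal_inter_eq_setIntegral hm hB hf hA,
    setIntegral_congr_ae (hm A hA) hc, setIntegral_const, smul_eq_mul, mul_comm]

end CondProb

section Uniform

variable {Ω : Type*} [MeasurableSpace Ω] {μ : Measure Ω} [IsFiniteMeasure μ]

lemma measureReal_le_of_uniform {Y : Ω → ℕ} (hY : Measurable Y) {n : ℕ}
    (hlaw : ∀ k ≤ n, μ.real {ω | Y ω = k} = 1 / ((n : ℝ) + 1)) {m : ℕ} (hm : m ≤ n) :
    μ.real {ω | Y ω ≤ m} = (m + 1) / (n + 1) := by
  calc μ.real {ω | Y ω ≤ m} = ∑ k ∈ Finset.range (m + 1), μ.real (Y ⁻¹' {k}) := by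
        rw [sum_measureReal_preimage_singleton _ fun k _ => hY (measurableSet_singleton k)]
        congr 1; ext; simp
    _ = ∑ k ∈ Finset.range (m + 1), 1 / ((n : ℝ) + 1) :=
        Finset.sum_congr rfl fun k hk => hlaw k (by rw [Finset.mem_range] at hk; omega)
    _ = (m + 1) / (n + 1) := by simp [div_eq_mul_inv]

theorem tendsto_measureReal_div_le_of_uniform {Y : ℕ → Ω → ℕ} (hY : ∀ n, Measurable (Y n))
    (hlaw : ∀ n k, k ≤ n → μ.real {ω | Y n ω = k} = 1 / ((n : ℝ) + 1)) {x : ℝ} (hx0 : 0 ≤ x)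
    (hx1 : x ≤ 1) :
    Tendsto (fun n : ℕ => μ.real {ω | (Y n ω : ℝ) / n ≤ x}) atTop (𝓝 x) := by
  refine (tendsto_natFloor_mul_add_one_div hx0).congr' (eventually_atTop.2 ⟨1, fun n hn => ?_⟩)
  have hn : (0 : ℝ) < n := by exact_mod_cast hn
  have hfloor : ⌊n * x⌋₊ ≤ n := Nat.floor_le_of_le (by nlinarith)
  have hset : {ω | (Y n ω : ℝ) / n ≤ x} = {ω | Y n ω ≤ ⌊n * x⌋₊} := by
    ext ω
    rw [Set.mem_ofPred_eq, Set.mem_ofPred_eq, Nat.le_floor_iff (by positivity), div_le_iff₀ hn,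
      mul_comm]
  dsimp only
  rw [hset, measureReal_le_of_uniform (hY n) (hlaw n) hfloor]

end Uniform

lemma pathAdj_iff {i j : Fin 3} : pathAdj i j ↔ (i = 1 ↔ j ≠ 1) := by
  unfold pathAdj; tauto

section Walk

variable {Ω : Type*} (X : ℕ → Ω → Fin 3)

/-- On a path that moves along edges from the middle vertex, time `2 * t + 1` is the turning point
of the `t`-th excursion away from the middle vertex. -/
def excursionCount (j : Fin 3) (n : ℕ) (ω : Ω) : ℕ :=
  ((Finset.range n).filter fun t => X (2 * t + 1) ω = j).card

lemma excursionCount_succ (j : Fin 3) (n : ℕ) (ω : Ω) :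
    excursionCount X j (n + 1) ω =
      excursionCount X j n ω + if X (2 * n + 1) ω = j then 1 else 0 := by
  simp only [excursionCount, Finset.range_add_one, Finset.filter_insert]
  split_ifs <;> simp [Finset.card_insert_of_notMem]

lemma walkCross_succ (n : ℕ) (ω : Ω) (i j : Fin 3) :
    walkCross X (n + 1) ω i j = walkCross X n ω i j +
      if (X n ω = i ∧ X (n + 1) ω = j) ∨ (X n ω = j ∧ X (n + 1) ω = i) then 1 else 0 := by
  simp only [walkCross, Finset.range_add_one, Finset.filter_insert]
  split_ifs <;> simp [Finset.card_insert_of_notMem]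

variable {X} {ω : Ω}

lemma eq_one_iff_even (h0 : X 0 ω = 1) (hpath : ∀ n, pathAdj (X n ω) (X (n + 1) ω)) (n : ℕ) :
    X n ω = 1 ↔ Even n := by
  induction n with
  | zero => simpa using h0
  | succ n ih => rw [Nat.even_add_one, ← ih, pathAdj_iff.1 (hpath n), not_not]

lemma walkCross_two_mul (h0 : X 0 ω = 1) (hpath : ∀ n, pathAdj (X n ω) (X (n + 1) ω))
    {j : Fin 3} (hj : j ≠ 1) (n : ℕ) :
    walkCross X (2 * n) ω 1 j = 2 * excursionCount X j n ω := by
  induction n with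
  | zero => simp [walkCross, excursionCount]
  | succ n ih =>
    have heven : X (2 * n) ω = 1 := (eq_one_iff_even h0 hpath _).2 (even_two_mul n)
    have heven' : X (2 * n + 1 + 1) ω = 1 :=
      (eq_one_iff_even h0 hpath _).2 (by rw [add_assoc]; exact even_two_mul (n + 1))
    rw [show 2 * (n + 1) = 2 * n + 1 + 1 by ring, walkCross_succ, walkCross_succ, ih,
      excursionCount_succ, heven, heven']
    by_cases hx : X (2 * n + 1) ω = j
    · simp [hx]; ring
    · simp [hx, Ne.symm hj]

lemma excursionCount_zero_add_two (h0 : X 0 ω = 1)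
    (hpath : ∀ n, pathAdj (X n ω) (X (n + 1) ω)) (n : ℕ) :
    excursionCount X 0 n ω + excursionCount X 2 n ω = n := by
  have hodd (t : ℕ) : ¬ X (2 * t + 1) ω = 0 ↔ X (2 * t + 1) ω = 2 := by
    have h : X (2 * t + 1) ω ≠ 1 := by simp [eq_one_iff_even h0 hpath]
    revert h; generalize X (2 * t + 1) ω = x; revert x; decide
  simpa only [excursionCount, hodd, Finset.card_range] using
    Finset.card_filter_add_card_filter_not (s := Finset.range n) (fun t => X (2 * t + 1) ω = 0)

end Walk

section ERRW

variable {Ω : Type*}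

noncomputable def errwWeight (α : ℝ) (X : ℕ → Ω → Fin 3) (n : ℕ) (ω : Ω) (j : Fin 3) : ℝ :=
  if pathAdj (X n ω) j then α + walkCross X n ω (X n ω) j else 0

noncomputable def errwTransition (α : ℝ) (X : ℕ → Ω → Fin 3) (n : ℕ) (ω : Ω) (j : Fin 3) : ℝ :=
  errwWeight α X n ω j / ∑ k, errwWeight α X n ω k

abbrev walkHistory (X : ℕ → Ω → Fin 3) (n : ℕ) : MeasurableSpace Ω :=
  ⨆ i ∈ Finset.range (n + 1), MeasurableSpace.comap (X i) ⊤

def IsERRW [MeasurableSpace Ω] (μ : Measure Ω) (α : ℝ) (X : ℕ → Ω → Fin 3) : Prop :=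
  ∀ n j, μ[{ω | X (n + 1) ω = j}.indicator (fun _ => (1 : ℝ)) | walkHistory X n]
    =ᵐ[μ] fun ω => errwTransition α X n ω j

lemma errwTransition_two_mul {α : ℝ} {X : ℕ → Ω → Fin 3} {ω : Ω} (h0 : X 0 ω = 1)
    (hpath : ∀ n, pathAdj (X n ω) (X (n + 1) ω)) (n : ℕ) :
    errwTransition α X (2 * n) ω 0 = (α + 2 * excursionCount X 0 n ω) / (2 * α + 2 * n) := by
  have hsum : (excursionCount X 0 n ω : ℝ) + excursionCount X 2 n ω = n := by
    exact_mod_cast excursionCount_zero_add_two h0 hpath n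
  simp only [errwTransition, errwWeight, Fin.sum_univ_three,
    (eq_one_iff_even h0 hpath _).2 (even_two_mul n)]
  rw [walkCross_two_mul h0 hpath (j := 0) (by decide),
    walkCross_two_mul h0 hpath (j := 2) (by decide)]
  rw [if_pos (by decide : pathAdj 1 0), if_neg (by decide : ¬ pathAdj 1 1),
    if_pos (by decide : pathAdj 1 2)]
  push_cast
  congr 1; linarith

lemma measurableSet_walkHistory {X : ℕ → Ω → Fin 3} {i n : ℕ} (h : i ≤ n) (v : Fin 3) :
    MeasurableSet[walkHistory X n] {ω | X i ω = v} :=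
  le_biSup (f := fun i => MeasurableSpace.comap (X i) ⊤) (Finset.mem_range.2 (Nat.lt_succ_of_le h))
    _ ⟨{v}, trivial, rfl⟩

lemma measurable_excursionCount {X : ℕ → Ω → Fin 3} (j : Fin 3) (n : ℕ) :
    Measurable[walkHistory X (2 * n)] (excursionCount X j n) := by
  have h : excursionCount X j n =
      fun ω => ∑ t ∈ Finset.range n, if X (2 * t + 1) ω = j then 1 else 0 :=
    funext fun ω => Finset.card_filter _ _
  rw [h]
  refine Finset.measurable_sum _ fun t ht => Measurable.ite ?_ measurable_const measurable_const
  exact measurableSet_walkHistory (by have := Finset.mem_range.1 ht; omega) j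

variable [MeasurableSpace Ω] {X : ℕ → Ω → Fin 3}

lemma walkHistory_le (hmeas : ∀ n, Measurable (X n)) (n : ℕ) :
    walkHistory X n ≤ ‹MeasurableSpace Ω› :=
  iSup₂_le fun i _ => (hmeas i).comap_le

variable {μ : Measure Ω} {α : ℝ}

lemma IsERRW.measureReal_step [IsFiniteMeasure μ] (hX : IsERRW μ α X)
    (hmeas : ∀ n, Measurable (X n))
    (n : ℕ) (j : Fin 3) {A : Set Ω} (hA : MeasurableSet[walkHistory X n] A) {c : ℝ}
    (hc : ∀ᵐ ω ∂μ, ω ∈ A → errwTransition α X n ω j = c) :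
    μ.real (A ∩ {ω | X (n + 1) ω = j}) = c * μ.real A :=
  measureReal_inter_eq_mul (walkHistory_le hmeas n) (hmeas _ (measurableSet_singleton j))
    (hX n j) hA hc

lemma IsERRW.ae_pathAdj [IsFiniteMeasure μ] (hX : IsERRW μ α X) (hmeas : ∀ n, Measurable (X n)) :
    ∀ᵐ ω ∂μ, ∀ n, pathAdj (X n ω) (X (n + 1) ω) := by
  refine ae_all_iff.2 fun n => ?_
  have hstep (i j : Fin 3) : ∀ᵐ ω ∂μ, X n ω = i → X (n + 1) ω = j → pathAdj i j := by
    by_cases hij : pathAdj i j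
    · exact ae_of_all _ fun _ _ _ => hij
    have h := hX.measureReal_step hmeas n j (measurableSet_walkHistory le_rfl i) (c := 0)
      (ae_of_all _ fun ω (hω : X n ω = i) => by simp [errwTransition, errwWeight, hω, hij])
    rw [zero_mul, measureReal_eq_zero_iff] at h
    filter_upwards [measure_eq_zero_iff_ae_notMem.1 h] with ω hω h1 h2 using absurd ⟨h1, h2⟩ hω
  filter_upwards [ae_all_iff.2 fun i => ae_all_iff.2 (hstep i)] with ω hω using hω _ _ rfl rfl

end ERRW

section Polya

variable {Ω : Type*} [MeasurableSpace Ω] {μ : Measure Ω} {X : ℕ → Ω → Fin 3}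

lemma IsERRW.measureReal_excursion_left [IsFiniteMeasure μ] (hX : IsERRW μ 2 X)
    (hmeas : ∀ n, Measurable (X n)) (h0 : ∀ ω, X 0 ω = 1) (n k : ℕ) :
    μ.real ({ω | excursionCount X 0 n ω = k} ∩ {ω | X (2 * n + 1) ω = 0}) =
      (k + 1) / (n + 2) * μ.real {ω | excursionCount X 0 n ω = k} := by
  refine hX.measureReal_step hmeas (2 * n) 0
    (measurable_excursionCount 0 n (measurableSet_singleton k)) ?_
  filter_upwards [hX.ae_pathAdj hmeas] with ω hpath (hk : excursionCount X 0 n ω = k)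
  rw [errwTransition_two_mul (h0 ω) hpath, hk]
  field_simp
  ring

lemma IsERRW.measureReal_excursion_right [IsFiniteMeasure μ] (hX : IsERRW μ 2 X)
    (hmeas : ∀ n, Measurable (X n)) (h0 : ∀ ω, X 0 ω = 1) (n k : ℕ) :
    μ.real ({ω | excursionCount X 0 n ω = k} \ {ω | X (2 * n + 1) ω = 0}) =
      (n + 1 - k) / (n + 2) * μ.real {ω | excursionCount X 0 n ω = k} := by
  have hB : MeasurableSet {ω | X (2 * n + 1) ω = 0} := hmeas _ (measurableSet_singleton 0)
  rw [eq_sub_of_add_eq' (measureReal_inter_add_sdiff hB),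
    hX.measureReal_excursion_left hmeas h0]
  field_simp
  ring

theorem IsERRW.measureReal_excursionCount_eq [IsProbabilityMeasure μ] (hX : IsERRW μ 2 X)
    (hmeas : ∀ n, Measurable (X n)) (h0 : ∀ ω, X 0 ω = 1) (n k : ℕ) :
    μ.real {ω | excursionCount X 0 n ω = k} = if k ≤ n then 1 / ((n : ℝ) + 1) else 0 := by
  refine polyaUrn_uniform (q := fun n k => μ.real {ω | excursionCount X 0 n ω = k}) ?_ ?_ ?_ n k
  · intro k
    by_cases hk : k = 0 <;> simp [excursionCount, hk, eq_comm]
  · intro n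
    have hset : {ω | excursionCount X 0 (n + 1) ω = 0} =
        {ω | excursionCount X 0 n ω = 0} \ {ω | X (2 * n + 1) ω = 0} := by
      ext ω; simp [excursionCount_succ]
    rw [hset, hX.measureReal_excursion_right hmeas h0]
    simp
  · intro n k
    have hset : {ω | excursionCount X 0 (n + 1) ω = k + 1} =
        ({ω | excursionCount X 0 n ω = k + 1} \ {ω | X (2 * n + 1) ω = 0}) ∪
          ({ω | excursionCount X 0 n ω = k} ∩ {ω | X (2 * n + 1) ω = 0}) := by
      ext ω; by_cases hx : X (2 * n + 1) ω = 0 <;> simp [excursionCount_succ, hx]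
    have hdisj : Disjoint ({ω | excursionCount X 0 n ω = k + 1} \ {ω | X (2 * n + 1) ω = 0})
        ({ω | excursionCount X 0 n ω = k} ∩ {ω | X (2 * n + 1) ω = 0}) :=
      Set.disjoint_left.2 fun ω h1 h2 => h1.2 h2.2
    rw [hset, measureReal_union hdisj, hX.measureReal_excursion_right hmeas h0,
      hX.measureReal_excursion_left hmeas h0]
    · push_cast; ring
    · exact ((measurable_excursionCount 0 n).mono (walkHistory_le hmeas _) le_rfl
        (measurableSet_singleton k)).inter (hmeas _ (measurableSet_singleton 0))

end Polya

/-- For edge-reinforced random walk with initial weights `α = 2` on the path `a — 0 — b`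
(vertices `a = 0`, middle `= 1`, `b = 2`) started at the middle vertex, the half-crossing
counts `(L_{2n}^{0a}/2, L_{2n}^{0b}/2)` are distributed as the added ball counts of a
Pólya urn after `n` draws (uniform on `{(k, n-k) : 0 ≤ k ≤ n}`), and consequently
`L_{2n}^{0a}/(2n)` converges in distribution to the uniform distribution on `[0,1]`. -/
theorem errw_path_graph_polya
    {Ω : Type*} [MeasurableSpace Ω] (μ : Measure Ω) [IsProbabilityMeasure μ]
    (X : ℕ → Ω → Fin 3)
    (hmeas : ∀ n, Measurable (X n))
    (h0 : ∀ ω, X 0 ω = 1)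
    (hcond : ∀ (n : ℕ) (j : Fin 3),
      μ[Set.indicator {ω | X (n + 1) ω = j} (fun _ => (1 : ℝ)) |
          ⨆ i ∈ Finset.range (n + 1), MeasurableSpace.comap (X i) ⊤]
        =ᵐ[μ] fun ω =>
          (if pathAdj (X n ω) j then (2 : ℝ) + walkCross X n ω (X n ω) j else 0) /
            ∑ k : Fin 3,
              (if pathAdj (X n ω) k then (2 : ℝ) + walkCross X n ω (X n ω) k else 0)) :
    (∀ n k : ℕ, k ≤ n →
        μ {ω | walkCross X (2 * n) ω 1 0 = 2 * k ∧ walkCross X (2 * n) ω 1 2 = 2 * (n - k)}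
          = ((n : ℝ≥0∞) + 1)⁻¹) ∧
      (∀ x ∈ Set.Ioo (0 : ℝ) 1,
        Tendsto (fun n : ℕ =>
            (μ {ω | (walkCross X (2 * n) ω 1 0 : ℝ) / (2 * n) ≤ x}).toReal)
          atTop (𝓝 x)) := by
  have hX : IsERRW μ 2 X := hcond
  have hcross : ∀ᵐ ω ∂μ, ∀ n, walkCross X (2 * n) ω 1 0 = 2 * excursionCount X 0 n ω ∧
      walkCross X (2 * n) ω 1 2 = 2 * (n - excursionCount X 0 n ω) := by
    filter_upwards [hX.ae_pathAdj hmeas] with ω hpath n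
    have hsum := excursionCount_zero_add_two (h0 ω) hpath n
    rw [walkCross_two_mul (h0 ω) hpath (j := 0) (by decide),
      walkCross_two_mul (h0 ω) hpath (j := 2) (by decide)]
    omega
  have hlaw := hX.measureReal_excursionCount_eq hmeas h0
  refine ⟨fun n k hk => ?_, fun x hx => ?_⟩
  · calc _ = μ {ω | excursionCount X 0 n ω = k} := by
          refine measure_congr (eventuallyEq_set.2 ?_)
          filter_upwards [hcross] with ω hω
          simp only [(hω n).1, (hω n).2]
          omega
      _ = ((n : ℝ≥0∞) + 1)⁻¹ := by
          rw [← ofReal_measureReal, hlaw, if_pos hk, one_div,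
            ENNReal.ofReal_inv_of_pos (by positivity)]
          norm_cast
  · have hY (n : ℕ) : Measurable (excursionCount X 0 n) :=
      (measurable_excursionCount 0 n).mono (walkHistory_le hmeas _) le_rfl
    refine (tendsto_measureReal_div_le_of_uniform hY (fun n k hk => by rw [hlaw, if_pos hk])
      hx.1.le hx.2.le).congr fun n => measureReal_congr (eventuallyEq_set.2 ?_)
    filter_upwards [hcross] with ω hω
    rw [(hω n).1, Nat.cast_mul, Nat.cast_two,
      mul_div_mul_left _ _ two_ne_zero]
end
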